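/- Let d ∈ ℕ with d ≥ 1, let α, β ∈ [0,∞) and let γ ∈ [0, min(α, β, α + β − d/2)). Then sup_{v ∈ ℤ^d} Σ_{k ∈ ℤ^d} (λ_v)^γ / [(λ_k)^α (λ_{v−k})^β] < ∞. -/
import Mathlib

open scoped ENNReal

noncomputable def lam {d : ℕ} (x : Fin d → ℤ) : ℝ := 1 + ∑ i, ((x i : ℝ)) ^ 2

lemma lam_ge_one {d : ℕ} (x : Fin d → ℤ) : 1 ≤ lam x := by
  have : 0 ≤ ∑ i, ((x i : ℝ)) ^ 2 := Finset.sum_nonneg fun i _ => sq_nonneg _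
  simp [lam]; linarith

lemma lam_pos {d : ℕ} (x : Fin d → ℤ) : 0 < lam x := lt_of_lt_of_le one_pos (lam_ge_one x)

-- step 2a: 1-d summability
lemma summable_one_dim {c : ℝ} (hc : 1/2 < c) :
    Summable (fun n : ℤ => (1 + (n:ℝ)^2) ^ (-c)) := by
  have hnat : Summable (fun n : ℕ => (1 + (n:ℝ)^2) ^ (-c)) := by
    have h1 : Summable (fun n : ℕ => ((n:ℝ)) ^ (-(2*c))) :=
      Real.summable_nat_rpow.mpr (by linarith)
    have h2 : Summable (fun n : ℕ => (((n:ℕ)+1 : ℝ)) ^ (-(2*c))) := by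
      have := (summable_nat_add_iff 1).mpr h1
      simpa [Nat.cast_add] using this
    have h3 : Summable (fun n : ℕ => (2:ℝ)^c * (((n:ℕ)+1 : ℝ)) ^ (-(2*c))) := h2.mul_left _
    refine Summable.of_nonneg_of_le (fun n => Real.rpow_nonneg (by positivity) _) (fun n => ?_) h3
    have hb : (0:ℝ) < ((n:ℝ)+1)^2 / 2 := by positivity
    have hle : ((n:ℝ)+1)^2 / 2 ≤ 1 + (n:ℝ)^2 := by nlinarith [sq_nonneg ((n:ℝ)-1)]
    calc (1 + (n:ℝ)^2) ^ (-c) ≤ (((n:ℝ)+1)^2 / 2) ^ (-c) :=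
          Real.rpow_le_rpow_of_nonpos hb hle (by linarith)
      _ = (2:ℝ)^c * (((n:ℝ)+1)) ^ (-(2*c)) := by
          rw [Real.div_rpow (by positivity) (by norm_num), ← Real.rpow_natCast ((n:ℝ)+1) 2,
            ← Real.rpow_mul (by positivity), Real.rpow_neg (by norm_num : (0:ℝ) ≤ 2),
            div_eq_mul_inv, inv_inv, mul_comm]
          congr 1
          push_cast
          ring
  refine Summable.of_nat_of_neg hnat ?_
  simpa using hnat

-- step 2b: products over Pi types
lemma summable_pi_prod {g : ℤ → ℝ} (hg : Summable g) (hg0 : ∀ x, 0 ≤ g x) :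
    ∀ n : ℕ, Summable (fun k : Fin n → ℤ => ∏ i, g (k i)) := by
  intro n
  induction n with
  | zero => exact Summable.of_finite
  | succ m ih =>
    have h := hg.mul_of_nonneg ih (fun x => hg0 x)
      (fun k => Finset.prod_nonneg fun i _ => hg0 _)
    rw [← (Fin.consEquiv (fun _ : Fin (m+1) => ℤ)).summable_iff]
    refine h.congr fun p => ?_
    simp [Fin.consEquiv, Fin.prod_univ_succ]

-- step 2c: summability of lam^(-c)
lemma summable_lam {d : ℕ} (hd : 1 ≤ d) {c : ℝ} (hc : (d:ℝ)/2 < c) :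
    Summable (fun k : Fin d → ℤ => lam k ^ (-c)) := by
  have hd0 : (0:ℝ) < d := by exact_mod_cast Nat.pos_of_ne_zero (by omega)
  have hcd : 1/2 < c / d := by rw [lt_div_iff₀ hd0]; linarith [hc]
  have hc0 : 0 < c := lt_trans (by positivity) hc
  have hg : Summable (fun n : ℤ => (1 + (n:ℝ)^2) ^ (-(c/d))) := summable_one_dim hcd
  have hg0 : ∀ n : ℤ, 0 ≤ (1 + (n:ℝ)^2) ^ (-(c/d)) := fun n => Real.rpow_nonneg (by positivity) _
  refine Summable.of_nonneg_of_le (fun k => Real.rpow_nonneg (lam_pos k).le _)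
    (fun k => ?_) (summable_pi_prod hg hg0 d)
  -- AM-GM : ∏ (1+k_i²)^(1/d) ≤ lam k
  have hz : ∀ i ∈ Finset.univ, (0:ℝ) ≤ 1 + ((k i : ℝ))^2 := fun i _ => by positivity
  have hw : ∀ i ∈ (Finset.univ : Finset (Fin d)), (0:ℝ) ≤ 1/d := fun i _ => by positivity
  have hw' : ∑ _i : Fin d, (1:ℝ)/d = 1 := by
    rw [Finset.sum_const, Finset.card_univ, Fintype.card_fin, nsmul_eq_mul]
    field_simp
  have hAM := Real.geom_mean_le_arith_mean_weighted Finset.univ (fun _ => 1/d)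
    (fun i => 1 + ((k i : ℝ))^2) hw hw' hz
  have hAM2 : ∏ i, (1 + ((k i : ℝ))^2) ^ ((1:ℝ)/d) ≤ lam k := by
    refine hAM.trans ?_
    have : ∑ i, (1:ℝ)/d * (1 + ((k i : ℝ))^2) ≤ ∑ i, (1/d + ((k i : ℝ))^2) := by
      refine Finset.sum_le_sum fun i _ => ?_
      rw [mul_add, mul_one]
      have h1 : (1:ℝ)/d * ((k i : ℝ))^2 ≤ ((k i : ℝ))^2 := by
        have : (1:ℝ)/d ≤ 1 := by
          rw [div_le_one hd0]; exact_mod_cast hd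
        nlinarith [sq_nonneg ((k i : ℝ))]
      linarith
    refine this.trans ?_
    rw [Finset.sum_add_distrib, Finset.sum_const, Finset.card_univ, Fintype.card_fin,
      nsmul_eq_mul]
    have : (d:ℝ) * (1/d) = 1 := by field_simp
    rw [this, lam]
  -- raise to power c and invert
  have hprodpos : (0:ℝ) < ∏ i, (1 + ((k i : ℝ))^2) ^ ((1:ℝ)/d) :=
    Finset.prod_pos fun i _ => Real.rpow_pos_of_pos (by positivity) _
  have key : lam k ^ (-c) ≤ (∏ i, (1 + ((k i : ℝ))^2) ^ ((1:ℝ)/d)) ^ (-c) :=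
    Real.rpow_le_rpow_of_nonpos hprodpos hAM2 (by linarith)
  refine key.trans (le_of_eq ?_)
  rw [← Real.finset_prod_rpow _ _ (fun i _ => Real.rpow_nonneg (by positivity) _) (-c)]
  refine Finset.prod_congr rfl fun i _ => ?_
  rw [← Real.rpow_mul (by positivity)]
  congr 1
  field_simp

-- pointwise: x^(-p) * y^(-q) ≤ x^(-(p+q)) + y^(-(p+q))
lemma aux_split {x y p q : ℝ} (hx : 1 ≤ x) (hy : 1 ≤ y) (hp : 0 ≤ p) (hq : 0 ≤ q) :
    x ^ (-p) * y ^ (-q) ≤ x ^ (-(p+q)) + y ^ (-(p+q)) := by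
  have hx0 : (0:ℝ) < x := by linarith
  have hy0 : (0:ℝ) < y := by linarith
  rcases le_total x y with h | h
  · have h1 : y ^ (-q) ≤ x ^ (-q) := Real.rpow_le_rpow_of_nonpos hx0 h (by linarith)
    have h2 : x ^ (-p) * y ^ (-q) ≤ x ^ (-p) * x ^ (-q) :=
      mul_le_mul_of_nonneg_left h1 (Real.rpow_nonneg hx0.le _)
    have h3 : x ^ (-p) * x ^ (-q) = x ^ (-(p+q)) := by
      rw [← Real.rpow_add hx0]; ring_nf
    have h4 : (0:ℝ) ≤ y ^ (-(p+q)) := Real.rpow_nonneg hy0.le _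
    linarith
  · have h1 : x ^ (-p) ≤ y ^ (-p) := Real.rpow_le_rpow_of_nonpos hy0 h (by linarith)
    have h2 : x ^ (-p) * y ^ (-q) ≤ y ^ (-p) * y ^ (-q) :=
      mul_le_mul_of_nonneg_right h1 (Real.rpow_nonneg hy0.le _)
    have h3 : y ^ (-p) * y ^ (-q) = y ^ (-(p+q)) := by
      rw [← Real.rpow_add hy0]; ring_nf
    have h4 : (0:ℝ) ≤ x ^ (-(p+q)) := Real.rpow_nonneg hx0.le _
    linarith

-- main pointwise bound
lemma main_pointwise {x y L α β γ : ℝ} (hx : 1 ≤ x) (hy : 1 ≤ y) (hL0 : 0 ≤ L)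
    (hL : L ≤ 2*(x+y)) (hγ0 : 0 ≤ γ) (hγα : γ ≤ α) (hγβ : γ ≤ β) :
    L ^ γ / (x ^ α * y ^ β) ≤
      2 * 4 ^ γ * (x ^ (-(α+β-γ)) + y ^ (-(α+β-γ))) := by
  have hx0 : (0:ℝ) < x := by linarith
  have hy0 : (0:ℝ) < y := by linarith
  have hLmax : L ≤ 4 * max x y := by
    have := le_max_left x y; have := le_max_right x y; linarith
  have h1 : L ^ γ ≤ (4 * max x y) ^ γ :=
    Real.rpow_le_rpow hL0 hLmax hγ0
  have hmax0 : (0:ℝ) < max x y := lt_max_of_lt_left hx0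
  have h2 : (4 * max x y) ^ γ = 4 ^ γ * (max x y) ^ γ :=
    Real.mul_rpow (by norm_num) hmax0.le
  have h3 : (max x y) ^ γ ≤ x ^ γ + y ^ γ := by
    rcases max_cases x y with ⟨h, _⟩ | ⟨h, _⟩ <;> rw [h]
    · have : (0:ℝ) ≤ y ^ γ := Real.rpow_nonneg hy0.le _; linarith
    · have : (0:ℝ) ≤ x ^ γ := Real.rpow_nonneg hx0.le _; linarith
  have hxα : (0:ℝ) < x ^ α := Real.rpow_pos_of_pos hx0 _
  have hyβ : (0:ℝ) < y ^ β := Real.rpow_pos_of_pos hy0 _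
  have h4γ : (0:ℝ) ≤ (4:ℝ) ^ γ := Real.rpow_nonneg (by norm_num) _
  have hLγ : L ^ γ ≤ 4 ^ γ * (x ^ γ + y ^ γ) := by
    calc L ^ γ ≤ (4 * max x y) ^ γ := h1
      _ = 4 ^ γ * (max x y) ^ γ := h2
      _ ≤ 4 ^ γ * (x ^ γ + y ^ γ) := by
          exact mul_le_mul_of_nonneg_left h3 h4γ
  have hdiv : L ^ γ / (x ^ α * y ^ β) ≤ 4 ^ γ * (x ^ γ + y ^ γ) / (x ^ α * y ^ β) :=
    div_le_div_of_nonneg_right hLγ (by positivity) |>.trans_eq rfl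
  refine hdiv.trans ?_
  have e1 : x ^ γ / (x ^ α * y ^ β) = x ^ (-(α - γ)) * y ^ (-β) := by
    rw [Real.rpow_neg hx0.le, Real.rpow_neg hy0.le, Real.rpow_sub hx0]
    field_simp
  have e2 : y ^ γ / (x ^ α * y ^ β) = x ^ (-α) * y ^ (-(β - γ)) := by
    rw [Real.rpow_neg hx0.le, Real.rpow_neg hy0.le, Real.rpow_sub hy0]
    field_simp
  have b1 : x ^ (-(α - γ)) * y ^ (-β) ≤ x ^ (-(α+β-γ)) + y ^ (-(α+β-γ)) := by
    have h := aux_split hx hy (by linarith : (0:ℝ) ≤ α - γ) (by linarith : (0:ℝ) ≤ β)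
    rwa [show α - γ + β = α+β-γ from by ring] at h
  have b2 : x ^ (-α) * y ^ (-(β - γ)) ≤ x ^ (-(α+β-γ)) + y ^ (-(α+β-γ)) := by
    have h := aux_split hx hy (by linarith : (0:ℝ) ≤ α) (by linarith : (0:ℝ) ≤ β - γ)
    rwa [show α + (β - γ) = α+β-γ from by ring] at h
  have expand : 4 ^ γ * (x ^ γ + y ^ γ) / (x ^ α * y ^ β)
      = 4 ^ γ * (x ^ γ / (x ^ α * y ^ β) + y ^ γ / (x ^ α * y ^ β)) := by
    field_simp
  rw [expand, e1, e2]
  have hsum : x ^ (-(α - γ)) * y ^ (-β) + x ^ (-α) * y ^ (-(β - γ))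
      ≤ 2 * (x ^ (-(α+β-γ)) + y ^ (-(α+β-γ))) := by linarith
  calc 4 ^ γ * (x ^ (-(α - γ)) * y ^ (-β) + x ^ (-α) * y ^ (-(β - γ)))
      ≤ 4 ^ γ * (2 * (x ^ (-(α+β-γ)) + y ^ (-(α+β-γ)))) :=
        mul_le_mul_of_nonneg_left hsum h4γ
    _ = 2 * 4 ^ γ * (x ^ (-(α+β-γ)) + y ^ (-(α+β-γ))) := by ring

lemma lam_le {d : ℕ} (v k : Fin d → ℤ) : lam v ≤ 2 * (lam k + lam (v - k)) := by
  have hpt : ∀ i, ((v i : ℝ))^2 ≤ 2*((k i : ℝ))^2 + 2*(((v-k) i : ℝ))^2 := by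
    intro i
    have hv : (v i : ℝ) = (k i : ℝ) + ((v-k) i : ℝ) := by
      have : (v - k) i = v i - k i := rfl
      rw [this]; push_cast; ring
    rw [hv]; nlinarith [sq_nonneg ((k i : ℝ) - ((v-k) i : ℝ))]
  have hsum : ∑ i, ((v i : ℝ))^2 ≤ ∑ i, (2*((k i : ℝ))^2 + 2*(((v-k) i : ℝ))^2) :=
    Finset.sum_le_sum fun i _ => hpt i
  rw [Finset.sum_add_distrib, ← Finset.mul_sum, ← Finset.mul_sum] at hsum
  simp only [lam]
  linarith

/-- Regularity of discrete convolutions (corollary):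
for `γ ∈ [0, min(α, β, α + β − d/2))` it holds that
`sup_{v ∈ ℤ^d} Σ_{k ∈ ℤ^d} (λ_v)^γ / [(λ_k)^α (λ_{v−k})^β] < ∞`. -/
theorem discrete_conv_regularity_cor (d : ℕ) (hd : 1 ≤ d) (α β γ : ℝ)
    (hα : 0 ≤ α) (hβ : 0 ≤ β) (hγ0 : 0 ≤ γ)
    (hγ : γ < min α (min β (α + β - (d : ℝ) / 2))) :
    (⨆ v : Fin d → ℤ, ∑' k : Fin d → ℤ,
        ENNReal.ofReal ((lam v) ^ γ / ((lam k) ^ α * (lam (v - k)) ^ β))) < ⊤ := by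
  set c : ℝ := α + β - γ with hc
  have hγα : γ < α := lt_of_lt_of_le hγ (min_le_left _ _)
  have hγβ : γ < β := lt_of_lt_of_le hγ ((min_le_right _ _).trans (min_le_left _ _))
  have hγc : γ < α + β - (d:ℝ)/2 := lt_of_lt_of_le hγ ((min_le_right _ _).trans (min_le_right _ _))
  have hcd : (d:ℝ)/2 < c := by rw [hc]; linarith
  have hsum : Summable (fun k : Fin d → ℤ => lam k ^ (-c)) := summable_lam hd hcd
  set S : ℝ≥0∞ := ∑' k : Fin d → ℤ, ENNReal.ofReal (lam k ^ (-c)) with hS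
  have hSlt : S < ⊤ := by
    rw [hS, ← ENNReal.ofReal_tsum_of_nonneg (fun k => Real.rpow_nonneg (lam_pos k).le _) hsum]
    exact ENNReal.ofReal_lt_top
  have key : ∀ v : Fin d → ℤ,
      (∑' k : Fin d → ℤ, ENNReal.ofReal ((lam v) ^ γ / ((lam k) ^ α * (lam (v - k)) ^ β)))
        ≤ ENNReal.ofReal (2 * 4 ^ γ) * (S + S) := by
    intro v
    have step1 : ∀ k : Fin d → ℤ,
        ENNReal.ofReal ((lam v) ^ γ / ((lam k) ^ α * (lam (v - k)) ^ β))
          ≤ ENNReal.ofReal (2 * 4 ^ γ) *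
              (ENNReal.ofReal (lam k ^ (-c)) + ENNReal.ofReal (lam (v-k) ^ (-c))) := by
      intro k
      have hpw := main_pointwise (lam_ge_one k) (lam_ge_one (v-k))
        (lam_pos v).le (lam_le v k) hγ0 hγα.le hγβ.le
      rw [← hc] at hpw
      calc ENNReal.ofReal ((lam v) ^ γ / ((lam k) ^ α * (lam (v - k)) ^ β))
          ≤ ENNReal.ofReal (2 * 4 ^ γ * (lam k ^ (-c) + lam (v-k) ^ (-c))) :=
            ENNReal.ofReal_le_ofReal hpw
        _ = ENNReal.ofReal (2 * 4 ^ γ) *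
              (ENNReal.ofReal (lam k ^ (-c)) + ENNReal.ofReal (lam (v-k) ^ (-c))) := by
            rw [ENNReal.ofReal_mul (by positivity),
              ENNReal.ofReal_add (Real.rpow_nonneg (lam_pos k).le _)
                (Real.rpow_nonneg (lam_pos (v-k)).le _)]
    calc (∑' k : Fin d → ℤ, ENNReal.ofReal ((lam v) ^ γ / ((lam k) ^ α * (lam (v - k)) ^ β)))
        ≤ ∑' k : Fin d → ℤ, ENNReal.ofReal (2 * 4 ^ γ) *
            (ENNReal.ofReal (lam k ^ (-c)) + ENNReal.ofReal (lam (v-k) ^ (-c))) :=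
          ENNReal.tsum_le_tsum step1
      _ = ENNReal.ofReal (2 * 4 ^ γ) * (∑' k : Fin d → ℤ,
            (ENNReal.ofReal (lam k ^ (-c)) + ENNReal.ofReal (lam (v-k) ^ (-c)))) :=
          ENNReal.tsum_mul_left
      _ = ENNReal.ofReal (2 * 4 ^ γ) * (S +
            ∑' k : Fin d → ℤ, ENNReal.ofReal (lam (v-k) ^ (-c))) := by
          rw [ENNReal.tsum_add]
      _ = ENNReal.ofReal (2 * 4 ^ γ) * (S + S) := by
          congr 1
          congr 1
          exact Equiv.tsum_eq (Equiv.subLeft v) (fun k => ENNReal.ofReal (lam k ^ (-c)))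
  refine lt_of_le_of_lt (iSup_le key) ?_
  exact ENNReal.mul_lt_top ENNReal.ofReal_lt_top (ENNReal.add_lt_top.mpr ⟨hSlt, hSlt⟩)
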